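/- (Main theorem: explicit minimum of the second moment for binary cycles) Let m₁ ≥ m₂ ≥ 1 be natural numbers, N = m₁ + m₂, and set ℓ = ⌊N/m₂⌋. Then the minimum of ∑_{j : ZMod N} Δ_C(j)² over all admissible cycles C : ZMod N → {a₁, a₂} (with fibers of sizes m₁ and m₂) exists and equals m₁ + 3·m₂ + (m₂·(ℓ+1) − N)·ℓ² + (N − m₂·ℓ)·(ℓ+1)². Consequently, by the variance–moment identity, the minimum variance over admissible cycles equals (1/N)·(m₁ + 3·m₂ + (m₂·(ℓ+1) − N)·ℓ² + (N − m₂·ℓ)·(ℓ+1)²) − 4. -/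

import Mathlib

open Finset

/-- The distance from position `j` to the next occurrence of the same symbol:
the least positive `d` with `C (j + d) = C j`. -/
noncomputable def cycleDist {N : ℕ} {A : Type*} (C : ZMod N → A) (j : ZMod N) : ℕ :=
  sInf {d : ℕ | 0 < d ∧ C (j + (d : ZMod N)) = C j}

/-- A cycle is admissible for multiplicities `m` if every fiber has the prescribed size. -/
def Admissible {N : ℕ} [NeZero N] {A : Type*} [Fintype A] [DecidableEq A]
    (m : A → ℕ) (C : ZMod N → A) : Prop :=
  ∀ a : A, (Finset.univ.filter (fun j => C j = a)).card = m a

/-- The mean of a cycle. -/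
noncomputable def cycleMean {N : ℕ} [NeZero N] {A : Type*} (C : ZMod N → A) : ℚ :=
  (∑ j : ZMod N, (cycleDist C j : ℚ)) / N

/-- The second (raw) moment of a cycle. -/
noncomputable def cycleMoment2 {N : ℕ} [NeZero N] {A : Type*} (C : ZMod N → A) : ℚ :=
  (∑ j : ZMod N, (cycleDist C j : ℚ) ^ 2) / N

/-- The variance of a cycle. -/
noncomputable def cycleVariance {N : ℕ} [NeZero N] {A : Type*} (C : ZMod N → A) : ℚ :=
  (∑ j : ZMod N, ((cycleDist C j : ℚ) - cycleMean C) ^ 2) / N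

/-!
The gaps between consecutive occurrences of a symbol tile `ZMod N`, so on each fiber the
distances sum to `N`; hence the mean of a binary cycle is `2` and its variance is `M₂ - 4`.
For naturals `Δ, t` one has `(2t + 1) Δ ≤ Δ² + t (t + 1)`, with equality iff
`Δ ∈ {t, t + 1}`. Summing with `t = 1` over the `m₁`-fiber and `t = ℓ` over the `m₂`-fiber
bounds `∑ Δ²` from below by the claimed value. Equality holds for the mechanical word of slope
`m₂ / N`, whose `1`s are never adjacent and are `ℓ` or `ℓ + 1` apart.
-/

open Function

section General

variable {N : ℕ} {A : Type*} (C : ZMod N → A)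

noncomputable def distTo (a : A) (k : ZMod N) : ℕ :=
  sInf {d : ℕ | C (k + d) = a}

theorem cycleDist_le {j : ZMod N} {d : ℕ} (hd : 0 < d) (h : C (j + d) = C j) :
    cycleDist C j ≤ d :=
  Nat.sInf_le ⟨hd, h⟩

variable {C} in
theorem distTo_le {a : A} {k : ZMod N} {d : ℕ} (h : C (k + d) = a) : distTo C a k ≤ d :=
  Nat.sInf_le h

variable [NeZero N]

theorem cycleDist_pos (j : ZMod N) : 0 < cycleDist C j :=
  (Nat.sInf_mem (s := {d : ℕ | 0 < d ∧ C (j + d) = C j}) ⟨N, N.pos_of_neZero, by simp⟩).1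

theorem cycleDist_spec (j : ZMod N) : C (j + cycleDist C j) = C j :=
  (Nat.sInf_mem (s := {d : ℕ | 0 < d ∧ C (j + d) = C j}) ⟨N, N.pos_of_neZero, by simp⟩).2

theorem le_cycleDist {j : ZMod N} {d : ℕ} (h : ∀ e, 0 < e → e < d → C (j + e) ≠ C j) :
    d ≤ cycleDist C j :=
  not_lt.1 fun hlt => h _ (cycleDist_pos C j) hlt (cycleDist_spec C j)

variable {C}

theorem distTo_spec {a : A} (ha : a ∈ Set.range C) (k : ZMod N) : C (k + distTo C a k) = a := by
  obtain ⟨s, rfl⟩ := ha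
  exact Nat.sInf_mem (s := {d : ℕ | C (k + d) = C s}) ⟨(s - k).val, by simp⟩

theorem distTo_of_ne {a : A} (ha : a ∈ Set.range C) {k : ZMod N} (hk : C k ≠ a) :
    distTo C a k = distTo C a (k + 1) + 1 := by
  have hspec := distTo_spec ha k
  obtain ⟨d, hd⟩ : ∃ d, distTo C a k = d + 1 :=
    Nat.exists_eq_succ_of_ne_zero fun h0 => hk (by simpa [h0] using hspec)
  refine le_antisymm (distTo_le ?_) ?_
  · simpa [add_assoc, add_comm (1 : ZMod N)] using distTo_spec ha (k + 1)
  · rw [hd, add_le_add_iff_right]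
    exact distTo_le (by simpa [hd, add_assoc, add_comm (1 : ZMod N)] using hspec)

variable (C) in
theorem cycleDist_eq_distTo_add_one (k : ZMod N) :
    cycleDist C k = distTo C (C k) (k + 1) + 1 := by
  obtain ⟨d, hd⟩ := Nat.exists_eq_succ_of_ne_zero (cycleDist_pos C k).ne'
  refine le_antisymm (cycleDist_le C (Nat.succ_pos _) ?_) ?_
  · simpa [add_assoc, add_comm (1 : ZMod N)] using distTo_spec ⟨k, rfl⟩ (k + 1)
  · rw [hd, Nat.succ_le_succ_iff]
    exact distTo_le (by simpa [hd, add_assoc, add_comm (1 : ZMod N)] using cycleDist_spec C k)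

theorem distTo_add_one_add_one [DecidableEq A] {a : A} (ha : a ∈ Set.range C) (k : ZMod N) :
    distTo C a (k + 1) + 1 = distTo C a k + if C k = a then cycleDist C k else 0 := by
  split_ifs with hk
  · have h0 : distTo C a k = 0 := Nat.le_zero.1 (distTo_le (d := 0) (by simpa using hk))
    rw [cycleDist_eq_distTo_add_one, hk, h0, zero_add]
  · rw [distTo_of_ne ha hk, add_zero]

/-- Telescoping: `distTo C a (k + 1) + 1 - distTo C a k` vanishes off the fiber of `a` and is the
gap `cycleDist C k` on it. -/
theorem sum_cycleDist_filter_eq [DecidableEq A] {a : A} (ha : a ∈ Set.range C) :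
    ∑ j with C j = a, cycleDist C j = N := by
  have htele := Finset.sum_congr rfl fun k (_ : k ∈ univ) => distTo_add_one_add_one ha k
  have hshift : ∑ k, distTo C a (k + 1) = ∑ k, distTo C a k :=
    Fintype.sum_equiv (Equiv.addRight 1) _ _ fun _ => rfl
  rw [Finset.sum_add_distrib, Finset.sum_add_distrib, ← Finset.sum_filter, hshift] at htele
  simpa using htele.symm

theorem cycleVariance_eq_cycleMoment2_sub_sq :
    cycleVariance C = cycleMoment2 C - cycleMean C ^ 2 := by
  have hN : (N : ℚ) ≠ 0 := Nat.cast_ne_zero.2 (NeZero.ne N)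
  have hsum : ∑ j, (cycleDist C j : ℚ) = N * cycleMean C := by
    rw [cycleMean, mul_div_cancel₀ _ hN]
  simp only [cycleVariance, cycleMoment2, sub_sq, Finset.sum_add_distrib, Finset.sum_sub_distrib,
    ← Finset.sum_mul, ← Finset.mul_sum, hsum, Finset.sum_const, Finset.card_univ, ZMod.card,
    nsmul_eq_mul]
  field_simp
  ring

variable [Fintype A] [DecidableEq A]

theorem sum_mul_cycleDist (hC : Surjective C) (g : A → ℕ) :
    ∑ j, g (C j) * cycleDist C j = N * ∑ a, g a := by
  rw [← Finset.sum_fiberwise univ C, Finset.mul_sum]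
  refine Finset.sum_congr rfl fun a _ => ?_
  rw [Finset.sum_congr rfl fun j hj => by rw [(Finset.mem_filter.1 hj).2], ← Finset.mul_sum,
    sum_cycleDist_filter_eq (hC a), mul_comm]

theorem cycleMean_eq_card (hC : Surjective C) : cycleMean C = Fintype.card A := by
  have hsum := sum_mul_cycleDist hC 1
  simp only [Pi.one_apply, one_mul, Finset.sum_const, Finset.card_univ, smul_eq_mul,
    mul_one] at hsum
  rw [cycleMean, ← Nat.cast_sum, hsum, Nat.cast_mul,
    mul_div_cancel_left₀ _ (Nat.cast_ne_zero.2 (NeZero.ne N))]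

theorem Admissible.surjective {m : A → ℕ} (hC : Admissible m C) (hm : ∀ a, 0 < m a) :
    Surjective C := fun a => by
  obtain ⟨j, hj⟩ := Finset.card_pos.1 ((hC a).symm ▸ hm a)
  exact ⟨j, (Finset.mem_filter.1 hj).2⟩

theorem Admissible.sum_comp {m : A → ℕ} (hC : Admissible m C) (f : A → ℕ) :
    ∑ j, f (C j) = ∑ a, m a * f a := by
  rw [← Finset.sum_fiberwise univ C]
  refine Finset.sum_congr rfl fun a _ => ?_
  rw [Finset.sum_congr rfl fun j hj => by rw [(Finset.mem_filter.1 hj).2], Finset.sum_const,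
    hC a, smul_eq_mul]

theorem two_mul_add_one_mul_le (x t : ℕ) : (2 * t + 1) * x ≤ x ^ 2 + t * (t + 1) := by
  rcases le_or_gt x t with h | h <;> nlinarith

theorem two_mul_add_one_mul_eq {x t : ℕ} (h₁ : t ≤ x) (h₂ : x ≤ t + 1) :
    (2 * t + 1) * x = x ^ 2 + t * (t + 1) := by
  obtain rfl | rfl : x = t ∨ x = t + 1 := by omega
  all_goals ring

theorem mul_sum_le_sum_cycleDist_sq_add (hC : Surjective C) (t : A → ℕ) :
    N * ∑ a, (2 * t a + 1) ≤ ∑ j, cycleDist C j ^ 2 + ∑ j, t (C j) * (t (C j) + 1) := by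
  rw [← sum_mul_cycleDist hC, ← Finset.sum_add_distrib]
  exact Finset.sum_le_sum fun j _ => two_mul_add_one_mul_le _ _

theorem mul_sum_eq_sum_cycleDist_sq_add (hC : Surjective C) (t : A → ℕ)
    (ht : ∀ j, t (C j) ≤ cycleDist C j ∧ cycleDist C j ≤ t (C j) + 1) :
    N * ∑ a, (2 * t a + 1) = ∑ j, cycleDist C j ^ 2 + ∑ j, t (C j) * (t (C j) + 1) := by
  rw [← sum_mul_cycleDist hC, ← Finset.sum_add_distrib]
  exact Finset.sum_congr rfl fun j _ => two_mul_add_one_mul_eq (ht j).1 (ht j).2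

end General

section Binary

variable {N : ℕ} [NeZero N] {m₁ m₂ : ℕ} {C : ZMod N → Fin 2}

theorem admissible_fin_two_of_card (hN : N = m₁ + m₂) (h : #{j | C j = 1} = m₂) :
    Admissible ![m₁, m₂] C := by
  have hsplit := Finset.card_filter_add_card_filter_not (s := univ) (fun j => C j = 1)
  rw [Finset.card_univ, ZMod.card] at hsplit
  have h₀ : #{j | C j = 0} = #{j | ¬C j = 1} := by
    congr 1
    exact Finset.filter_congr fun j _ => by omega
  intro a
  fin_cases a
  · simp only [Fin.zero_eta, Matrix.cons_val_zero]
    omega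
  · simpa using h

theorem Admissible.surjective_fin_two (hC : Admissible ![m₁, m₂] C) (h₁ : 0 < m₁)
    (h₂ : 0 < m₂) : Surjective C :=
  hC.surjective <| by simp [Fin.forall_fin_two, h₁, h₂]

theorem Admissible.le_sum_cycleDist_sq (hC : Admissible ![m₁, m₂] C) (h₁ : 0 < m₁)
    (h₂ : 0 < m₂) (ℓ : ℕ) :
    N * (3 + (2 * ℓ + 1)) ≤ ∑ j, cycleDist C j ^ 2 + (m₁ * 2 + m₂ * (ℓ * (ℓ + 1))) := by
  have h := mul_sum_le_sum_cycleDist_sq_add (hC.surjective_fin_two h₁ h₂) ![1, ℓ]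
  rw [hC.sum_comp fun a => ![1, ℓ] a * (![1, ℓ] a + 1)] at h
  simpa [Fin.sum_univ_two] using h

theorem Admissible.sum_cycleDist_sq_eq (hC : Admissible ![m₁, m₂] C) (h₁ : 0 < m₁)
    (h₂ : 0 < m₂) (ℓ : ℕ)
    (hΔ : ∀ j, ![1, ℓ] (C j) ≤ cycleDist C j ∧ cycleDist C j ≤ ![1, ℓ] (C j) + 1) :
    N * (3 + (2 * ℓ + 1)) = ∑ j, cycleDist C j ^ 2 + (m₁ * 2 + m₂ * (ℓ * (ℓ + 1))) := by
  have h := mul_sum_eq_sum_cycleDist_sq_add (hC.surjective_fin_two h₁ h₂) ![1, ℓ] hΔ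
  rw [hC.sum_comp fun a => ![1, ℓ] a * (![1, ℓ] a + 1)] at h
  simpa [Fin.sum_univ_two] using h

theorem Admissible.cycleVariance_eq (hC : Admissible ![m₁, m₂] C) (h₁ : 0 < m₁)
    (h₂ : 0 < m₂) : cycleVariance C = ((∑ j, cycleDist C j ^ 2 : ℕ) : ℚ) / N - 4 := by
  rw [cycleVariance_eq_cycleMoment2_sub_sq, cycleMean_eq_card (hC.surjective_fin_two h₁ h₂),
    cycleMoment2]
  norm_num

end Binary

theorem card_filter_val {N : ℕ} [NeZero N] (p : ℕ → Prop) [DecidablePred p] :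
    #{j : ZMod N | p j.val} = #{x ∈ range N | p x} := by
  refine Finset.card_nbij' ZMod.val (↑) (fun j hj => ?_) (fun x hx => ?_)
    (fun j _ => ZMod.natCast_zmod_val j) (fun x hx => ZMod.val_cast_of_lt ?_)
  · simp_all [ZMod.val_lt]
  · obtain ⟨hxN, hpx⟩ : x < N ∧ p x := by simpa using hx
    simpa [Nat.mod_eq_of_lt hxN] using hpx
  · simp_all

section Balanced

/-- The mechanical word of slope `k / N`: position `x` carries a `1` iff `(x k, (x + 1) k]`
contains a multiple of `N`. -/
def balancedWord (N k x : ℕ) : Fin 2 :=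
  if (x + 1) * k % N < k then 1 else 0

def balancedCycle (N k : ℕ) (j : ZMod N) : Fin 2 :=
  balancedWord N k j.val

variable {N k : ℕ}

theorem add_add_one_mul_mod (x e : ℕ) :
    (x + e + 1) * k % N = ((x + 1) * k % N + e * k) % N := by
  rw [Nat.mod_add_mod]
  ring_nf

theorem balancedWord_add_eq_zero {x e : ℕ} (hx : balancedWord N k x = 1) (he₀ : 0 < e)
    (he : e < N / k) : balancedWord N k (x + e) = 0 := by
  have hρ : (x + 1) * k % N < k := by by_contra h; simp [balancedWord, h] at hx
  have hek : (e + 1) * k ≤ N := (Nat.mul_le_mul_right k he).trans (Nat.div_mul_le_self N k)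
  have hk : k ≤ e * k := Nat.le_mul_of_pos_left k he₀
  rw [balancedWord, add_add_one_mul_mod, Nat.mod_eq_of_lt (by linarith), if_neg (by omega)]

theorem balancedWord_add_div_eq_one (hk : 0 < k) (hkN : k ≤ N) {x : ℕ}
    (hx : balancedWord N k x = 1) :
    balancedWord N k (x + N / k) = 1 ∨ balancedWord N k (x + (N / k + 1)) = 1 := by
  have hρ : (x + 1) * k % N < k := by by_contra h; simp [balancedWord, h] at hx
  have hlo : N / k * k ≤ N := Nat.div_mul_le_self N k
  have hhi : N < N / k * k + k := by
    simpa [mul_add, mul_comm] using Nat.lt_mul_div_succ N hk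
  have hmod : ∀ a, N ≤ a → a < N + k → a % N = a - N := fun a h₁ h₂ => by
    rw [Nat.mod_eq_sub_mod h₁, Nat.mod_eq_of_lt (by omega)]
  simp only [balancedWord, ite_eq_left_iff]
  rw [add_add_one_mul_mod, add_add_one_mul_mod, add_one_mul (N / k) k]
  rcases le_or_gt N ((x + 1) * k % N + N / k * k) with h | h
  · left
    rw [hmod _ h (by omega)]
    omega
  · right
    rw [hmod _ (by omega) (by omega)]
    omega

theorem balancedWord_eq_one_iff (hkN : k < N) (x : ℕ) :
    balancedWord N k x = 1 ↔ N ≤ x * k % N + k := by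
  have hlt : x * k % N < N := Nat.mod_lt _ (by omega)
  rw [balancedWord, add_one_mul, ← Nat.mod_add_mod]
  by_cases h : N ≤ x * k % N + k
  · rw [Nat.mod_eq_sub_mod h, Nat.mod_eq_of_lt (by omega), if_pos (by omega)]
    simp [h]
  · rw [Nat.mod_eq_of_lt (by omega), if_neg (by omega)]
    simp [h]

theorem card_balancedWord_eq_one (hkN : k < N) :
    #{x ∈ range N | balancedWord N k x = 1} = k := by
  have hind : ∀ x, (if balancedWord N k x = 1 then 1 else 0) = (x + 1) * k / N - x * k / N := by
    intro x
    rw [add_one_mul, Nat.add_div (by omega), Nat.div_eq_of_lt hkN, Nat.mod_eq_of_lt hkN]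
    by_cases h : N ≤ x * k % N + k <;> simp [h, balancedWord_eq_one_iff hkN]
  rw [card_filter, Finset.sum_congr rfl fun x _ => hind x,
    Finset.sum_range_tsub (f := fun x => x * k / N)
      fun a b hab => Nat.div_le_div_right (Nat.mul_le_mul_right k hab)]
  simp [Nat.mul_div_cancel_left k (by omega : 0 < N)]

variable [NeZero N]

theorem balancedCycle_add (j : ZMod N) (d : ℕ) :
    balancedCycle N k (j + d) = balancedWord N k (j.val + d) := by
  have hper : (((j.val + d) % N + 1) * k) % N = ((j.val + d + 1) * k) % N :=
    ((Nat.mod_modEq _ N).add_right 1).mul_right k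
  rw [balancedCycle, ZMod.val_add, ZMod.val_natCast, Nat.add_mod_mod, balancedWord, balancedWord,
    hper]

theorem balancedCycle_cycleDist_mem (hk : 0 < k) (hkN : 2 * k ≤ N) (j : ZMod N) :
    ![1, N / k] (balancedCycle N k j) ≤ cycleDist (balancedCycle N k) j ∧
      cycleDist (balancedCycle N k) j ≤ ![1, N / k] (balancedCycle N k j) + 1 := by
  have hℓ : 2 ≤ N / k := (Nat.le_div_iff_mul_le hk).2 (by linarith)
  obtain hc | hc : balancedCycle N k j = 0 ∨ balancedCycle N k j = 1 := by omega
  · simp only [hc, Matrix.cons_val_zero]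
    refine ⟨cycleDist_pos _ j, ?_⟩
    obtain h₁ | h₁ : balancedWord N k (j.val + 1) = 0 ∨ balancedWord N k (j.val + 1) = 1 := by
      omega
    · exact (cycleDist_le _ one_pos (by rw [balancedCycle_add, hc, h₁])).trans one_le_two
    · refine cycleDist_le _ two_pos ?_
      rw [balancedCycle_add, hc]
      exact balancedWord_add_eq_zero (e := 1) h₁ one_pos (by omega)
  · have hj : balancedWord N k j.val = 1 := hc
    simp only [hc, Matrix.cons_val_one, Matrix.cons_val_fin_one]
    refine ⟨le_cycleDist _ fun e he₀ he => ?_, ?_⟩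
    · rw [balancedCycle_add, hc, balancedWord_add_eq_zero hj he₀ he]
      decide
    · obtain h | h := balancedWord_add_div_eq_one hk (by omega) hj
      · exact (cycleDist_le _ (by omega) (by rw [balancedCycle_add, hc, h])).trans
          (Nat.le_succ _)
      · exact cycleDist_le _ (by omega) (by rw [balancedCycle_add, hc, h])

theorem balancedCycle_admissible {m : ℕ} (hN : N = m + k) (hkN : k < N) :
    Admissible ![m, k] (balancedCycle N k) :=
  admissible_fin_two_of_card hN <| (card_filter_val _).trans (card_balancedWord_eq_one hkN)

end Balanced

theorem minMoment2_add_eq {N m₁ m₂ ℓ : ℕ} (hN : N = m₁ + m₂) (hlo : m₂ * ℓ ≤ N)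
    (hhi : N < m₂ * (ℓ + 1)) :
    m₁ + 3 * m₂ + (m₂ * (ℓ + 1) - N) * ℓ ^ 2 + (N - m₂ * ℓ) * (ℓ + 1) ^ 2
      + (m₁ * 2 + m₂ * (ℓ * (ℓ + 1))) = N * (3 + (2 * ℓ + 1)) := by
  zify [hlo, hhi.le] at hN ⊢
  linear_combination (-3) * hN

/-- Main theorem: the minimum of the sum of squared distances over admissible binary cycles
exists and equals `m₁ + 3m₂ + (m₂(ℓ+1) − N)ℓ² + (N − m₂ℓ)(ℓ+1)²` with `ℓ = ⌊N/m₂⌋`;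
consequently the minimum variance equals that quantity divided by `N`, minus 4. -/
theorem main_min_moment2 (m₁ m₂ : ℕ) (h2 : 1 ≤ m₂) (h12 : m₂ ≤ m₁)
    (N : ℕ) (hN : N = m₁ + m₂) [NeZero N] (ℓ : ℕ) (hℓ : ℓ = N / m₂) :
    IsLeast {s : ℕ | ∃ C : ZMod N → Fin 2, Admissible ![m₁, m₂] C ∧
        ∑ j : ZMod N, cycleDist C j ^ 2 = s}
      (m₁ + 3 * m₂ + (m₂ * (ℓ + 1) - N) * ℓ ^ 2 + (N - m₂ * ℓ) * (ℓ + 1) ^ 2) ∧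
    IsLeast {v : ℚ | ∃ C : ZMod N → Fin 2, Admissible ![m₁, m₂] C ∧ cycleVariance C = v}
      (((m₁ + 3 * m₂ + (m₂ * (ℓ + 1) - N) * ℓ ^ 2 + (N - m₂ * ℓ) * (ℓ + 1) ^ 2 : ℕ) : ℚ)
        / (N : ℚ) - 4) := by
  have h1 : 0 < m₁ := by omega
  set T := m₁ + 3 * m₂ + (m₂ * (ℓ + 1) - N) * ℓ ^ 2 + (N - m₂ * ℓ) * (ℓ + 1) ^ 2
  have hT : T + (m₁ * 2 + m₂ * (ℓ * (ℓ + 1))) = N * (3 + (2 * ℓ + 1)) :=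
    minMoment2_add_eq hN (hℓ ▸ Nat.mul_div_le N m₂) (hℓ ▸ Nat.lt_mul_div_succ N h2)
  have hbal : Admissible ![m₁, m₂] (balancedCycle N m₂) :=
    balancedCycle_admissible hN (by omega)
  have hbal_sum : ∑ j, cycleDist (balancedCycle N m₂) j ^ 2 = T := by
    have := hbal.sum_cycleDist_sq_eq h1 h2 ℓ (hℓ ▸ balancedCycle_cycleDist_mem h2 (by omega))
    omega
  have hlower : ∀ C : ZMod N → Fin 2, Admissible ![m₁, m₂] C → T ≤ ∑ j, cycleDist C j ^ 2 :=
    fun C hC => by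
      have := hC.le_sum_cycleDist_sq h1 h2 ℓ
      omega
  refine ⟨⟨⟨_, hbal, hbal_sum⟩, ?_⟩,
    ⟨⟨_, hbal, by rw [hbal.cycleVariance_eq h1 h2, hbal_sum]⟩, ?_⟩⟩
  · rintro _ ⟨C, hC, rfl⟩
    exact hlower C hC
  · rintro _ ⟨C, hC, rfl⟩
    rw [hC.cycleVariance_eq h1 h2]
    gcongr
    exact hlower C hC
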